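/- Let V = ⊕_{i∈I} V_i and W = ⊕_{i∈I} W_i be I-graded vector spaces, let x : V → V be a graded linear map of degree +1 and x̄ : V → V a graded linear map of degree −1 with x ∘ x̄ = x̄ ∘ x, and let t : V → W be a graded linear map of degree 0. Assume stability: the only I-graded subspace S ⊆ V with x(S) ⊆ S, x̄(S) ⊆ S and t(S) = 0 is S = 0. Set N̄ := ker x̄. Then N̄ is an I-graded subspace with x(N̄) ⊆ N̄; let x', x̄' be the graded maps induced on V/N̄ and let t' : V/N̄ → W be the degree −1 graded map induced by t ∘ x̄ (well-defined since (t ∘ x̄)(N̄) = 0). Then x' ∘ x̄' = x̄' ∘ x', and the only I-graded subspace S' ⊆ V/N̄ with x'(S') ⊆ S', x̄'(S') ⊆ S' and t'(S') = 0 is S' = 0. -/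

import Mathlib

/-!
The kernel of a graded map is graded, because the components of an element of the kernel are sent
into distinct independent graded pieces, so each of them is killed separately.

For stability of the quotient, let `S'` be a graded subspace of `V / ker x̄` stable under `x'`,
`x̄'` and killed by `t'`, and let `S` be the graded part of its preimage in `V`. Then `x̄ S` is
graded, stable under `x̄`, stable under `x` because `x` and `x̄` commute, and killed by `t` because
`t ∘ x̄` factors through `t'`. Stability upstairs gives `x̄ S = 0`, i.e. `S ⊆ ker x̄`; since every
homogeneous element of `S'` lifts to `S`, this forces `S' = 0`.
-/

open Submodule

section

variable {R M N ι κ : Type*} [Ring R] [AddCommGroup M] [Module R M] [AddCommGroup N] [Module R N]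

namespace Submodule

def gradedPart (A : ι → Submodule R M) (S : Submodule R M) : Submodule R M :=
  ⨆ i, S ⊓ A i

def IsGraded (A : ι → Submodule R M) (S : Submodule R M) : Prop :=
  S = gradedPart A S

theorem gradedPart_le (A : ι → Submodule R M) (S : Submodule R M) : gradedPart A S ≤ S :=
  iSup_le fun _ => inf_le_left

theorem isGraded_iff_le_gradedPart {A : ι → Submodule R M} {S : Submodule R M} :
    IsGraded A S ↔ S ≤ gradedPart A S :=
  ⟨le_of_eq, fun h => h.antisymm (gradedPart_le A S)⟩

theorem isGraded_iSup {A : ι → Submodule R M} {S : κ → Submodule R M} (σ : κ → ι)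
    (hS : ∀ k, S k ≤ A (σ k)) : IsGraded A (⨆ k, S k) :=
  isGraded_iff_le_gradedPart.mpr <| iSup_le fun k =>
    (le_inf (le_iSup S k) (hS k)).trans (le_iSup (fun i => (⨆ k, S k) ⊓ A i) (σ k))

theorem isGraded_gradedPart (A : ι → Submodule R M) (S : Submodule R M) :
    IsGraded A (gradedPart A S) :=
  isGraded_iSup id fun _ => inf_le_right

theorem IsGraded.map {A : ι → Submodule R M} {B : κ → Submodule R N} {S : Submodule R M}
    (hS : IsGraded A S) {f : M →ₗ[R] N} {σ : ι → κ} (hf : ∀ i, (A i).map f ≤ B (σ i)) :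
    IsGraded B (S.map f) := by
  rw [hS, gradedPart, map_iSup]
  exact isGraded_iSup σ fun i => (map_mono inf_le_right).trans (hf i)

theorem map_gradedPart_le {A : ι → Submodule R M} {S : Submodule R M} {f : M →ₗ[R] M}
    {σ : ι → ι} (hf : ∀ i, (A i).map f ≤ A (σ i)) (hS : S.map f ≤ S) :
    (gradedPart A S).map f ≤ gradedPart A S := by
  rw [gradedPart, map_iSup]
  exact iSup_le fun i => (map_inf_le f).trans <|
    (inf_le_inf hS (hf i)).trans (le_iSup (fun j => S ⊓ A j) (σ i))

theorem isGraded_ker {A : ι → Submodule R M} {B : κ → Submodule R N} (hA : iSup A = ⊤)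
    (hB : iSupIndep B) {f : M →ₗ[R] N} {σ : ι → κ} (hσ : Function.Injective σ)
    (hf : ∀ i, (A i).map f ≤ B (σ i)) : IsGraded A (LinearMap.ker f) := by
  refine isGraded_iff_le_gradedPart.mpr fun v hv => ?_
  obtain ⟨w, hwA, rfl⟩ := (mem_iSup_iff_exists_finsupp A v).mp (hA ▸ mem_top)
  have hfw : ∀ i, f (w i) = 0 := by
    intro i
    by_cases hi : i ∈ w.support
    · refine (iSupIndep_iff_finsetSum_eq_zero_imp_eq_zero _).mp (hB.comp hσ) w.support
        (fun i => f (w i)) (fun i _ => hf i ⟨w i, hwA i, rfl⟩) ?_ i hi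
      rw [← map_sum]
      exact hv
    · rw [Finsupp.notMem_support_iff.mp hi, map_zero]
  exact (mem_iSup_iff_exists_finsupp _ _).mpr ⟨w, fun i => ⟨hfw i, hwA i⟩, rfl⟩

theorem map_comap_le_comap_of_comm {p : M →ₗ[R] N} {f : M →ₗ[R] M} {g : N →ₗ[R] N}
    (h : ∀ v, g (p v) = p (f v)) {S : Submodule R N} (hS : S.map g ≤ S) :
    (S.comap p).map f ≤ S.comap p := by
  rintro _ ⟨v, hv, rfl⟩
  rw [mem_comap, ← h]
  exact hS ⟨p v, hv, rfl⟩

end Submodule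

def IsStable (A : ι → Submodule R M) (x xbar : M →ₗ[R] M) (t : M →ₗ[R] N) : Prop :=
  ∀ S, IsGraded A S → S.map x ≤ S → S.map xbar ≤ S → S.map t = ⊥ → S = ⊥

theorem isStable_quotient_ker {A : ι → Submodule R M} {x xbar : M →ₗ[R] M} {t : M →ₗ[R] N}
    {σ τ : ι → ι} (hx : ∀ i, (A i).map x ≤ A (σ i)) (hxbar : ∀ i, (A i).map xbar ≤ A (τ i))
    (hcomm : x ∘ₗ xbar = xbar ∘ₗ x) (hstab : IsStable A x xbar t)
    {x' xbar' : (M ⧸ LinearMap.ker xbar) →ₗ[R] (M ⧸ LinearMap.ker xbar)}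
    {t' : (M ⧸ LinearMap.ker xbar) →ₗ[R] N}
    (hx' : ∀ v, x' ((LinearMap.ker xbar).mkQ v) = (LinearMap.ker xbar).mkQ (x v))
    (hxbar' : ∀ v, xbar' ((LinearMap.ker xbar).mkQ v) = (LinearMap.ker xbar).mkQ (xbar v))
    (ht' : ∀ v, t' ((LinearMap.ker xbar).mkQ v) = t (xbar v)) :
    IsStable (fun i => (A i).map (LinearMap.ker xbar).mkQ) x' xbar' t' := by
  intro S' hS' hxS' hxbarS' htS'
  set π := (LinearMap.ker xbar).mkQ
  set S := gradedPart A (S'.comap π)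
  have hSx : S.map x ≤ S := map_gradedPart_le hx (map_comap_le_comap_of_comm hx' hxS')
  have hSxbar : S.map xbar ≤ S :=
    map_gradedPart_le hxbar (map_comap_le_comap_of_comm hxbar' hxbarS')
  have hS_le : S.map π ≤ S' := (map_mono (gradedPart_le A _)).trans (map_comap_le π S')
  have hxbarS : S.map xbar = ⊥ := by
    refine hstab _ ((isGraded_gradedPart A _).map hxbar) ?_ (map_mono hSxbar) ?_
    · rw [← map_comp, hcomm, map_comp]
      exact map_mono hSx
    · have htxbar : t ∘ₗ xbar = t' ∘ₗ π := LinearMap.ext fun v => (ht' v).symm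
      rw [← map_comp, htxbar, map_comp, ← le_bot_iff, ← htS']
      exact map_mono hS_le
  have hS_ker : S ≤ LinearMap.ker xbar := LinearMap.le_ker_iff_map.mpr hxbarS
  rw [hS', ← le_bot_iff]
  refine iSup_le fun i => ?_
  calc S' ⊓ (A i).map π = (A i ⊓ S'.comap π).map π := by rw [inf_comm, map_inf_eq_map_inf_comap]
    _ ≤ S.map π := map_mono (le_iSup_of_le i (inf_comm _ _).le)
    _ ≤ (LinearMap.ker xbar).map π := map_mono hS_ker
    _ = ⊥ := mkQ_map_self _

end

theorem stmt8_general (n : ℕ)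
    (V W : Type*) [AddCommGroup V] [Module ℂ V] [AddCommGroup W] [Module ℂ W]
    (Vgr : ZMod (n + 1) → Submodule ℂ V)
    (hV : DirectSum.IsInternal Vgr)
    (x xbar : V →ₗ[ℂ] V) (t : V →ₗ[ℂ] W)
    (hx : ∀ i, (Vgr i).map x ≤ Vgr (i + 1))
    (hxbar : ∀ i, (Vgr i).map xbar ≤ Vgr (i - 1))
    (hcomm : x ∘ₗ xbar = xbar ∘ₗ x)
    (hstab : ∀ S : Submodule ℂ V, (S = ⨆ i, S ⊓ Vgr i) →
      S.map x ≤ S → S.map xbar ≤ S → S.map t = ⊥ → S = ⊥)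
    (Nbar : Submodule ℂ V) (hNbar : Nbar = LinearMap.ker xbar) :
    (Nbar = ⨆ i, Nbar ⊓ Vgr i) ∧
    Nbar.map x ≤ Nbar ∧
    (Nbar.map (t ∘ₗ xbar) = ⊥) ∧
    ∃ (x' xbar' : (V ⧸ Nbar) →ₗ[ℂ] (V ⧸ Nbar)) (t' : (V ⧸ Nbar) →ₗ[ℂ] W),
      (∀ v : V, x' (Nbar.mkQ v) = Nbar.mkQ (x v)) ∧
      (∀ v : V, xbar' (Nbar.mkQ v) = Nbar.mkQ (xbar v)) ∧
      (∀ v : V, t' (Nbar.mkQ v) = t (xbar v)) ∧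
      x' ∘ₗ xbar' = xbar' ∘ₗ x' ∧
      (∀ S' : Submodule ℂ (V ⧸ Nbar), (S' = ⨆ i, S' ⊓ (Vgr i).map Nbar.mkQ) →
        S'.map x' ≤ S' → S'.map xbar' ≤ S' → S'.map t' = ⊥ → S' = ⊥) := by
  subst hNbar
  have hker_x : (LinearMap.ker xbar).map x ≤ LinearMap.ker xbar :=
    map_comap_le_comap_of_comm (fun v => LinearMap.congr_fun hcomm v) (map_bot x).le
  have hker_xbar : (LinearMap.ker xbar).map xbar ≤ LinearMap.ker xbar :=
    (LinearMap.le_ker_iff_map.mp le_rfl).trans_le bot_le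
  let x' := (LinearMap.ker xbar).mapQ _ x (map_le_iff_le_comap.mp hker_x)
  let xbar' := (LinearMap.ker xbar).mapQ _ xbar (map_le_iff_le_comap.mp hker_xbar)
  let t' := (LinearMap.ker xbar).liftQ (t ∘ₗ xbar) (LinearMap.ker_le_ker_comp xbar t)
  refine ⟨isGraded_ker hV.submodule_iSup_eq_top hV.submodule_iSupIndep sub_left_injective hxbar,
    hker_x, LinearMap.le_ker_iff_map.mp (LinearMap.ker_le_ker_comp xbar t),
    x', xbar', t', fun _ => rfl, fun _ => rfl, fun _ => rfl,
    linearMap_qext _ <| LinearMap.ext fun v => congrArg (mkQ _) (LinearMap.congr_fun hcomm v),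
    isStable_quotient_ker hx hxbar hcomm hstab (fun _ => rfl) (fun _ => rfl) (fun _ => rfl)⟩

/-- Stability descent in the proof of Theorem 5.4(2): stability of `(x + x̄, t)` passes
to the induced point on `V / ker x̄` with framing map induced by `t ∘ x̄`. -/
theorem stmt8 (n : ℕ) (hn : 1 ≤ n)
    (V W : Type*) [AddCommGroup V] [Module ℂ V] [AddCommGroup W] [Module ℂ W]
    [FiniteDimensional ℂ V] [FiniteDimensional ℂ W]
    (Vgr : ZMod (n + 1) → Submodule ℂ V) (Wgr : ZMod (n + 1) → Submodule ℂ W)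
    (hV : DirectSum.IsInternal Vgr) (hW : DirectSum.IsInternal Wgr)
    (x xbar : V →ₗ[ℂ] V) (t : V →ₗ[ℂ] W)
    (hx : ∀ i, (Vgr i).map x ≤ Vgr (i + 1))
    (hxbar : ∀ i, (Vgr i).map xbar ≤ Vgr (i - 1))
    (ht : ∀ i, (Vgr i).map t ≤ Wgr i)
    (hcomm : x ∘ₗ xbar = xbar ∘ₗ x)
    (hstab : ∀ S : Submodule ℂ V, (S = ⨆ i, S ⊓ Vgr i) →
      S.map x ≤ S → S.map xbar ≤ S → S.map t = ⊥ → S = ⊥)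
    (Nbar : Submodule ℂ V) (hNbar : Nbar = LinearMap.ker xbar) :
    (Nbar = ⨆ i, Nbar ⊓ Vgr i) ∧
    Nbar.map x ≤ Nbar ∧
    (Nbar.map (t ∘ₗ xbar) = ⊥) ∧
    ∃ (x' xbar' : (V ⧸ Nbar) →ₗ[ℂ] (V ⧸ Nbar)) (t' : (V ⧸ Nbar) →ₗ[ℂ] W),
      (∀ v : V, x' (Nbar.mkQ v) = Nbar.mkQ (x v)) ∧
      (∀ v : V, xbar' (Nbar.mkQ v) = Nbar.mkQ (xbar v)) ∧
      (∀ v : V, t' (Nbar.mkQ v) = t (xbar v)) ∧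
      x' ∘ₗ xbar' = xbar' ∘ₗ x' ∧
      (∀ S' : Submodule ℂ (V ⧸ Nbar), (S' = ⨆ i, S' ⊓ (Vgr i).map Nbar.mkQ) →
        S'.map x' ≤ S' → S'.map xbar' ≤ S' → S'.map t' = ⊥ → S' = ⊥) :=
  stmt8_general n V W Vgr hV x xbar t hx hxbar hcomm hstab Nbar hNbar
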